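/- arXiv:2412.04451 — 6 statements merged into one kernel-verified Lean document; each statement's English description precedes it below -/
import Mathlib

section
/- Let V be a finite-dimensional real vector space and let J₀, J : V → V be linear complex structures (i.e. J₀² = -id and J² = -id) such that id - J₀∘J is invertible. Then the linear map I := 2·(id - J₀∘J)⁻¹ intertwines the two complex structures: J ∘ I = I ∘ J₀. Moreover, if a group G acts linearly on V and both J₀ and J commute with the G-action, then so does I. -/
/-- Let `V` be a finite-dimensional real vector space and `J₀ J : V → V`
linear complex structures (`J₀² = -id`, `J² = -id`) such that `id - J₀∘J` is invertible.
Then `I := 2 • (id - J₀∘J)⁻¹` satisfies `J ∘ I = I ∘ J₀`.  Moreover, if a group `G` acts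
linearly on `V` and both `J₀` and `J` commute with the action, so does `I`. -/
theorem intertwiner_of_complex_structures
    {V : Type*} [AddCommGroup V] [Module ℝ V] [FiniteDimensional ℝ V]
    (J₀ J : Module.End ℝ V) (hJ₀ : J₀ * J₀ = -1) (hJ : J * J = -1)
    (hinv : IsUnit (1 - J₀ * J))
    {G : Type*} [Group G] (ρ : Representation ℝ G V)
    (hρJ₀ : ∀ g : G, ρ g * J₀ = J₀ * ρ g) (hρJ : ∀ g : G, ρ g * J = J * ρ g) :
    J * ((2 : ℝ) • Ring.inverse (1 - J₀ * J)) =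
      ((2 : ℝ) • Ring.inverse (1 - J₀ * J)) * J₀ ∧
    ∀ g : G, ρ g * ((2 : ℝ) • Ring.inverse (1 - J₀ * J)) =
      ((2 : ℝ) • Ring.inverse (1 - J₀ * J)) * ρ g := by
  obtain ⟨u, hu⟩ := hinv
  have hinv' : Ring.inverse (1 - J₀ * J) = (↑u⁻¹ : Module.End ℝ V) := by
    rw [← hu, Ring.inverse_unit]
  have conj : ∀ a b : Module.End ℝ V, (↑u : Module.End ℝ V) * a = b * ↑u →
      a * (↑u⁻¹ : Module.End ℝ V) = (↑u⁻¹ : Module.End ℝ V) * b := by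
    intro a b h
    calc a * (↑u⁻¹ : Module.End ℝ V)
        = (↑u⁻¹ : Module.End ℝ V) * (↑u * a) * ↑u⁻¹ := by
          rw [u.inv_mul_cancel_left]
      _ = (↑u⁻¹ : Module.End ℝ V) * b := by
          rw [h, mul_assoc, u.mul_inv_cancel_right]
  constructor
  · -- key: (1 - J₀J) * J = J + J₀ = J₀ * (1 - J₀J)
    have key : (1 - J₀ * J) * J = J₀ * (1 - J₀ * J) := by
      have h1 : (1 - J₀ * J) * J = J + J₀ := by
        rw [sub_mul, one_mul, mul_assoc, hJ]; noncomm_ring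
      have h2 : J₀ * (1 - J₀ * J) = J₀ + J := by
        rw [mul_sub, mul_one, ← mul_assoc, hJ₀]; noncomm_ring
      rw [h1, h2, add_comm]
    have key' : J * (↑u⁻¹ : Module.End ℝ V) = (↑u⁻¹ : Module.End ℝ V) * J₀ := by
      apply conj; rw [hu]; exact key
    rw [hinv', mul_smul_comm, smul_mul_assoc, key']
  · intro g
    have hcomm : ρ g * (1 - J₀ * J) = (1 - J₀ * J) * ρ g := by
      rw [mul_sub, sub_mul, mul_one, one_mul, ← mul_assoc, hρJ₀ g, mul_assoc, hρJ g,
        ← mul_assoc]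
    have key' : ρ g * (↑u⁻¹ : Module.End ℝ V) = (↑u⁻¹ : Module.End ℝ V) * ρ g := by
      apply conj; rw [hu]; exact hcomm.symm
    rw [hinv', mul_smul_comm, smul_mul_assoc, key']
end

section
/- Let V be a finite-dimensional real vector space and let J₀, J : V → V be linear complex structures with id - J₀∘J invertible. Define A := -2·J₀∘(id + J₀∘J)∘(id - J₀∘J)⁻¹. Then A anticommutes with J₀ (i.e. J₀∘A = -A∘J₀), and id + (1/2)·J₀∘A = 2·(id - J₀∘J)⁻¹. -/
/-- With `J₀, J` complex structures on a finite-dimensional real vector space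
and `id - J₀∘J` invertible, the endomorphism `A := -2·J₀∘(id + J₀∘J)∘(id - J₀∘J)⁻¹`
anticommutes with `J₀`, and `id + (1/2)·J₀∘A = 2·(id - J₀∘J)⁻¹`. -/
theorem anticommuting_correction_of_complex_structures
    {V : Type*} [AddCommGroup V] [Module ℝ V] [FiniteDimensional ℝ V]
    (J₀ J : Module.End ℝ V) (hJ₀ : J₀ * J₀ = -1) (hJ : J * J = -1)
    (hinv : IsUnit (1 - J₀ * J)) :
    J₀ * ((-2 : ℝ) • (J₀ * (1 + J₀ * J) * Ring.inverse (1 - J₀ * J))) =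
      -(((-2 : ℝ) • (J₀ * (1 + J₀ * J) * Ring.inverse (1 - J₀ * J))) * J₀) ∧
    (1 : Module.End ℝ V) +
        (1 / 2 : ℝ) • (J₀ * ((-2 : ℝ) • (J₀ * (1 + J₀ * J) * Ring.inverse (1 - J₀ * J)))) =
      (2 : ℝ) • Ring.inverse (1 - J₀ * J) := by
  set u : Module.End ℝ V := 1 - J₀ * J with hu
  set w : Module.End ℝ V := Ring.inverse u with hw
  have huw : u * w = 1 := Ring.mul_inverse_cancel u hinv
  have hwu : w * u = 1 := Ring.inverse_mul_cancel u hinv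
  set u' : Module.End ℝ V := 1 - J * J₀ with hu'
  set w' : Module.End ℝ V := -(J₀ * w * J₀) with hw'
  -- basic product facts
  have hx : (J₀ * J) * (J * J₀) = 1 := by
    have : (J₀ * J) * (J * J₀) = J₀ * (J * J) * J₀ := by noncomm_ring
    rw [this, hJ]; simp [hJ₀]
  have h1 : u' * J₀ = J₀ * u := by
    simp only [hu, hu']
    have : (1 - J * J₀) * J₀ = J₀ - J * (J₀ * J₀) := by noncomm_ring
    rw [this, hJ₀]
    have : J₀ * (1 - J₀ * J) = J₀ - (J₀ * J₀) * J := by noncomm_ring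
    rw [this, hJ₀]
    noncomm_ring
  have h2 : J₀ * u' = u * J₀ := by
    simp only [hu, hu']
    noncomm_ring
  have hu'w' : u' * w' = 1 := by
    have : u' * w' = -((u' * J₀) * w * J₀) := by rw [hw']; noncomm_ring
    rw [this, h1]
    have : -(J₀ * u * w * J₀) = -(J₀ * (u * w) * J₀) := by noncomm_ring
    rw [this, huw]; simp [hJ₀]
  have hw'u' : w' * u' = 1 := by
    have : w' * u' = -(J₀ * w * (J₀ * u')) := by rw [hw']; noncomm_ring
    rw [this, h2]
    have : -(J₀ * w * (u * J₀)) = -(J₀ * (w * u) * J₀) := by noncomm_ring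
    rw [this, hwu]; simp [hJ₀]
  -- w commutes with 1 + J₀*J
  have hc : w * (1 + J₀ * J) = (1 + J₀ * J) * w := by
    have hcu : u * (1 + J₀ * J) = (1 + J₀ * J) * u := by rw [hu]; noncomm_ring
    calc w * (1 + J₀ * J) = w * (1 + J₀ * J) * (u * w) := by rw [huw, mul_one]
      _ = w * ((1 + J₀ * J) * u) * w := by noncomm_ring
      _ = w * (u * (1 + J₀ * J)) * w := by rw [hcu]
      _ = (w * u) * ((1 + J₀ * J) * w) := by noncomm_ring
      _ = (1 + J₀ * J) * w := by rw [hwu, one_mul]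
  -- the key algebraic identity
  have e1 : (1 + J₀ * J) * u' = -(u * (1 + J * J₀)) := by
    have l : (1 + J₀ * J) * u' = 1 - J * J₀ + J₀ * J - (J₀ * J) * (J * J₀) := by
      rw [hu']; noncomm_ring
    have r : -(u * (1 + J * J₀)) = -(1 + J * J₀ - J₀ * J - (J₀ * J) * (J * J₀)) := by
      rw [hu]; noncomm_ring
    rw [l, r, hx]; noncomm_ring
  -- main: (1+J₀J)*w = -((1+J*J₀)*w')
  have M : (1 + J₀ * J) * w = -((1 + J * J₀) * w') := by
    have cancel : ∀ b : Module.End ℝ V, w * (u * b * u') * w' = b := by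
      intro b
      calc w * (u * b * u') * w' = (w * u) * b * (u' * w') := by noncomm_ring
        _ = b := by rw [hwu, hu'w', one_mul, mul_one]
    have mid : u * ((1 + J₀ * J) * w) * u' = u * (-((1 + J * J₀) * w')) * u' := by
      rw [← hc]
      have l : u * (w * (1 + J₀ * J)) * u' = (u * w) * ((1 + J₀ * J) * u') := by noncomm_ring
      have r : u * (-((1 + J * J₀) * w')) * u' = -(u * (1 + J * J₀) * (w' * u')) := by
        noncomm_ring
      rw [l, r, huw, hw'u', one_mul, mul_one, e1]
    calc (1 + J₀ * J) * w = w * (u * ((1 + J₀ * J) * w) * u') * w' := (cancel _).symm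
      _ = w * (u * (-((1 + J * J₀) * w')) * u') * w' := by rw [mid]
      _ = -((1 + J * J₀) * w') := cancel _
  have h3 : J₀ * (1 + J₀ * J) = (1 + J * J₀) * J₀ := by
    have l : J₀ * (1 + J₀ * J) = J₀ + (J₀ * J₀) * J := by noncomm_ring
    have r : (1 + J * J₀) * J₀ = J₀ + J * (J₀ * J₀) := by noncomm_ring
    rw [l, r, hJ₀]; noncomm_ring
  constructor
  · -- anticommutation
    have key : (1 + J₀ * J) * w = J₀ * ((1 + J₀ * J) * (w * J₀)) := by
      have : J₀ * ((1 + J₀ * J) * (w * J₀)) = (J₀ * (1 + J₀ * J)) * w * J₀ := by noncomm_ring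
      rw [this, h3]
      have : (1 + J * J₀) * J₀ * w * J₀ = (1 + J * J₀) * (J₀ * w * J₀) := by noncomm_ring
      rw [this]
      have : (1 + J * J₀) * (J₀ * w * J₀) = -((1 + J * J₀) * w') := by rw [hw']; noncomm_ring
      rw [this, M]
    have lhs : J₀ * ((-2 : ℝ) • (J₀ * (1 + J₀ * J) * w)) =
        (-2 : ℝ) • (J₀ * (J₀ * (1 + J₀ * J) * w)) := by
      rw [mul_smul_comm]
    have lhs2 : J₀ * (J₀ * (1 + J₀ * J) * w) = (J₀ * J₀) * ((1 + J₀ * J) * w) := by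
      noncomm_ring
    have rhs : -(((-2 : ℝ) • (J₀ * (1 + J₀ * J) * w)) * J₀) =
        (2 : ℝ) • (J₀ * ((1 + J₀ * J) * (w * J₀))) := by
      rw [smul_mul_assoc, ← neg_smul]
      norm_num
      noncomm_ring
    rw [lhs, lhs2, hJ₀, rhs, ← key]
    rw [neg_one_mul, smul_neg, ← neg_smul]
    norm_num
  · -- the second identity
    have step : J₀ * ((-2 : ℝ) • (J₀ * (1 + J₀ * J) * w)) =
        (2 : ℝ) • ((1 + J₀ * J) * w) := by
      rw [mul_smul_comm]
      have : J₀ * (J₀ * (1 + J₀ * J) * w) = (J₀ * J₀) * ((1 + J₀ * J) * w) := by noncomm_ring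
      rw [this, hJ₀, neg_one_mul, smul_neg, ← neg_smul]
      norm_num
    rw [step, smul_smul]
    norm_num
    have h2w : (2 : ℝ) • w = w + w := two_smul ℝ w
    rw [h2w]
    have expand : (1 + J₀ * J) * w = w + (J₀ * J) * w := by noncomm_ring
    have hone : (1 : Module.End ℝ V) = w - (J₀ * J) * w := by
      have : u * w = w - (J₀ * J) * w := by rw [hu]; noncomm_ring
      rw [← this, huw]
    rw [expand]
    nth_rewrite 1 [hone]
    abel
end

section
/- Let 0 → K → ℤ^m → A → 0 be a short exact sequence of abelian groups with A finite. Then the restriction map Hom(ℤ^m, ℤ) → Hom(K, ℤ) (precomposition with the inclusion K ↪ ℤ^m) is injective, and its cokernel is isomorphic to A. -/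
/-- The restriction map `Hom(ℤ^m, ℤ) → Hom(K, ℤ)` given by precomposition with the
inclusion of the kernel `K = ker f`. -/
def restrictionToKernel {m : ℕ} {A : Type*} [AddCommGroup A] (f : (Fin m → ℤ) →+ A) :
    ((Fin m → ℤ) →+ ℤ) →+ ((AddMonoidHom.ker f) →+ ℤ) :=
  AddMonoidHom.mk' (fun φ => φ.comp (AddMonoidHom.ker f).subtype)
    (fun φ ψ => by ext x; rfl)

/-!
Since `ℤ^m ⧸ K ≅ A` is finite, `K` has full rank, so Smith normal form gives a basis `(bᵢ)` of
`ℤ^m` such that `(aᵢ • bᵢ)` is a basis of `K`, with all `aᵢ ≠ 0`. The restriction map is the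
transpose of the inclusion, so in the dual bases it is the same diagonal matrix `diag (aᵢ)`.
A diagonal map with nonzero entries is injective, and its cokernel is `∏ ℤ ⧸ (aᵢ)`; applied to
the inclusion and to the restriction, this identifies the cokernel of the restriction with
`ℤ^m ⧸ K ≅ A`.
-/

namespace LinearMap

variable {ι R P Q : Type*} [CommRing R] [AddCommGroup P] [Module R P] [AddCommGroup Q]
  [Module R Q] {g : P →ₗ[R] Q} {bP : Module.Basis ι R P} {bQ : Module.Basis ι R Q} {a : ι → R}

theorem repr_apply_of_diagonal (hg : ∀ i, g (bP i) = a i • bQ i) (y : P) (i : ι) :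
    bQ.repr (g y) i = a i * bP.repr y i := by
  have : (bQ.coord i).comp g = a i • bP.coord i := bP.ext fun j => by
    by_cases hij : j = i
    · subst hij; simp [hg]
    · simp [hg, Ne.symm hij]
  exact LinearMap.congr_fun this y

theorem injective_of_diagonal [NoZeroDivisors R] (hg : ∀ i, g (bP i) = a i • bQ i)
    (ha : ∀ i, a i ≠ 0) : Function.Injective g := by
  refine (injective_iff_map_eq_zero g).mpr fun y hy => bP.ext_elem fun i => ?_
  simpa [hy, ha i] using (repr_apply_of_diagonal hg y i).symm

theorem mem_range_iff_of_diagonal [Finite ι] (hg : ∀ i, g (bP i) = a i • bQ i) (x : Q) :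
    x ∈ range g ↔ ∀ i, a i ∣ bQ.repr x i := by
  constructor
  · rintro ⟨y, rfl⟩ i
    exact ⟨_, repr_apply_of_diagonal hg y i⟩
  · intro hdvd
    choose c hc using hdvd
    refine ⟨bP.equivFun.symm c, bQ.ext_elem fun i => ?_⟩
    rw [repr_apply_of_diagonal hg, hc, ← Module.Basis.coord_apply,
      Module.Basis.coord_equivFun_symm]

theorem dualMap_of_diagonal [Finite ι] [DecidableEq ι] (hg : ∀ i, g (bP i) = a i • bQ i)
    (i : ι) : g.dualMap (bQ.dualBasis i) = a i • bP.dualBasis i :=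
  bP.ext fun j => by simp [dualMap_apply, repr_apply_of_diagonal hg]

noncomputable def quotientRangeEquivPiOfDiagonal [Finite ι] (hg : ∀ i, g (bP i) = a i • bQ i) :
    (Q ⧸ range g) ≃ₗ[R] Π i, R ⧸ Ideal.span {a i} :=
  let π : Q →ₗ[R] Π i, R ⧸ Ideal.span {a i} :=
    LinearMap.pi fun i => (Ideal.span {a i}).mkQ ∘ₗ bQ.coord i
  have hπ : Function.Surjective π := fun t => by
    choose r hr using fun i => Ideal.Quotient.mk_surjective (t i)
    refine ⟨bQ.equivFun.symm r, funext fun i => ?_⟩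
    change (Ideal.span {a i}).mkQ (bQ.coord i (bQ.equivFun.symm r)) = t i
    rw [Module.Basis.coord_equivFun_symm, ← hr i]
    rfl
  have hker : ker π = range g := by
    ext x
    simp [π, mem_range_iff_of_diagonal hg, funext_iff, Ideal.Quotient.eq_zero_iff_mem,
      Ideal.mem_span_singleton]
  (Submodule.quotEquivOfEq _ _ hker.symm).trans (π.quotKerEquivOfSurjective hπ)

end LinearMap

/-- For a short exact sequence `0 → K → ℤ^m → A → 0` with `A` finite, the
restriction map `Hom(ℤ^m, ℤ) → Hom(K, ℤ)` is injective, and its cokernel is isomorphic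
to `A`. -/
theorem restriction_injective_and_cokernel_iso
    {m : ℕ} {A : Type*} [AddCommGroup A] [Finite A]
    (f : (Fin m → ℤ) →+ A) (hf : Function.Surjective f) :
    Function.Injective (restrictionToKernel f) ∧
    Nonempty ((((AddMonoidHom.ker f) →+ ℤ) ⧸ (restrictionToKernel f).range) ≃+ A) := by
  set N := (AddMonoidHom.ker f).toIntSubmodule
  have hquot : ((Fin m → ℤ) ⧸ N) ≃+ A := QuotientAddGroup.quotientKerEquivOfSurjective f hf
  have hrank : Module.finrank ℤ N = Module.finrank ℤ (Fin m → ℤ) :=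
    (Submodule.finiteQuotient_iff N).mp (Finite.of_equiv A hquot.symm)
  obtain ⟨b, a, c, hc⟩ := N.exists_smith_normal_form_of_rank_eq (Pi.basisFun ℤ (Fin m)) hrank
  have ha (i : Fin m) : a i ≠ 0 := fun h => c.ne_zero i (Subtype.ext (by simp [hc, h]))
  have hres (i : Fin m) : (restrictionToKernel f).toIntLinearMap
      ((b.dualBasis.map (addMonoidHomLequivInt ℤ).symm) i) =
      a i • (c.dualBasis.map (addMonoidHomLequivInt ℤ).symm) i := by
    ext k
    exact LinearMap.congr_fun (LinearMap.dualMap_of_diagonal (g := N.subtype) hc i) k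
  refine ⟨LinearMap.injective_of_diagonal hres ha, ⟨?_⟩⟩
  exact (LinearMap.quotientRangeEquivPiOfDiagonal hres).toAddEquiv.trans
    ((LinearMap.quotientRangeEquivPiOfDiagonal (g := N.subtype) hc).toAddEquiv.symm.trans
      ((Submodule.quotEquivOfEq _ _ N.range_subtype).toAddEquiv.trans hquot))
end

section
/- Let G be a finite group, V a finite-dimensional complex representation of G, and suppose V decomposes as V = L₁ ⊕ ⋯ ⊕ L_r ⊕ U where each Lᵢ is a one-dimensional G-invariant subspace and U is a G-invariant complement. Then for any subgroup H ≤ G, the sum of all irreducible H-subrepresentations of V of complex dimension at least 2 has dimension at most dim U. -/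
open scoped DirectSum


/-- Let `G` be a finite group acting on a finite-dimensional complex vector
space `V`, and suppose `V = L₁ ⊕ ⋯ ⊕ L_r ⊕ U` with each `Lᵢ` a one-dimensional
`G`-invariant subspace and `U` a `G`-invariant complement.  Then for any subgroup
`H ≤ G`, the sum of all irreducible `H`-subrepresentations of `V` of complex dimension at
least `2` has dimension at most `dim U`. -/
theorem dim_sum_of_large_irreducibles_le
    {G : Type*} [Group G] [Fintype G] {V : Type*} [AddCommGroup V]
    [Module ℂ V] [FiniteDimensional ℂ V] (ρ : Representation ℂ G V)
    {r : ℕ} (L : Fin r → Submodule ℂ V) (U : Submodule ℂ V)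
    (hL1 : ∀ i, Module.finrank ℂ (L i) = 1)
    (hLinv : ∀ i, ∀ g : G, ∀ v ∈ L i, ρ g v ∈ L i)
    (hUinv : ∀ g : G, ∀ v ∈ U, ρ g v ∈ U)
    (hdecomp : DirectSum.IsInternal (fun o : Option (Fin r) => o.elim U L))
    (H : Subgroup G) :
    Module.finrank ℂ
        (sSup {W : Submodule ℂ V |
            (∀ g ∈ H, ∀ v ∈ W, ρ g v ∈ W) ∧ 2 ≤ Module.finrank ℂ W ∧
            ∀ W' ≤ W, (∀ g ∈ H, ∀ v ∈ W', ρ g v ∈ W') → W' = ⊥ ∨ W' = W} :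
          Submodule ℂ V) ≤
      Module.finrank ℂ U := by
  set f : Option (Fin r) → Submodule ℂ V := fun o => o.elim U L with hf
  have hfinv : ∀ o g, ∀ v ∈ f o, ρ g v ∈ f o := by
    rintro (_|i) g v hv
    · exact hUinv g v hv
    · exact hLinv i g v hv
  let e : (⨁ o, ↥(f o)) ≃ₗ[ℂ] V := LinearEquiv.ofBijective (DirectSum.coeLinearMap f) hdecomp
  let Φ : G → (⨁ o, ↥(f o)) →ₗ[ℂ] (⨁ o, ↥(f o)) := fun g =>
    DFinsupp.mapRange.linearMap (fun o => (ρ g).restrict (fun v hv => hfinv o g v hv))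
  have key : ∀ g x, DirectSum.coeLinearMap f (Φ g x) = ρ g (DirectSum.coeLinearMap f x) := by
    intro g x
    induction x using DirectSum.induction_on with
    | zero => simp
    | of i b =>
        have h1 : Φ g (DirectSum.of _ i b) = DirectSum.of (fun o => ↥(f o)) i
            ((ρ g).restrict (fun v hv => hfinv i g v hv) b) := by
          exact DFinsupp.mapRange_single (hf := fun o => map_zero _)
        rw [h1, DirectSum.coeLinearMap_of, DirectSum.coeLinearMap_of]
        rfl
    | add x y hx hy => simp [map_add, hx, hy]
  have symm_comm : ∀ g v, e.symm (ρ g v) = Φ g (e.symm v) := by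
    intro g v
    apply e.injective
    have h1 : e (Φ g (e.symm v)) = ρ g (DirectSum.coeLinearMap f (e.symm v)) :=
      key g (e.symm v)
    have h2 : DirectSum.coeLinearMap f (e.symm v) = v := e.apply_symm_apply v
    rw [e.apply_symm_apply, h1, h2]
  -- projection onto L i component
  let p : Fin r → (V →ₗ[ℂ] V) := fun i =>
    (L i).subtype ∘ₗ (DirectSum.component ℂ (Option (Fin r)) (fun o => ↥(f o)) (some i))
      ∘ₗ (e.symm : V →ₗ[ℂ] (⨁ o, ↥(f o)))
  have hp : ∀ i v, p i v = ((e.symm v) (some i) : V) := fun i v => rfl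
  have hpcomm : ∀ i g v, p i (ρ g v) = ρ g (p i v) := by
    intro i g v
    rw [hp, hp, symm_comm]
    rfl
  -- every W in the set is contained in U
  have main : ∀ W ∈ {W : Submodule ℂ V |
      (∀ g ∈ H, ∀ v ∈ W, ρ g v ∈ W) ∧ 2 ≤ Module.finrank ℂ W ∧
      ∀ W' ≤ W, (∀ g ∈ H, ∀ v ∈ W', ρ g v ∈ W') → W' = ⊥ ∨ W' = W}, W ≤ U := by
    rintro W ⟨hWinv, hWdim, hWirr⟩
    have hker : ∀ i : Fin r, W ≤ LinearMap.ker (p i) := by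
      intro i
      set W' : Submodule ℂ V := W ⊓ LinearMap.ker (p i) with hW'
      have hW'le : W' ≤ W := inf_le_left
      have hW'inv : ∀ g ∈ H, ∀ v ∈ W', ρ g v ∈ W' := by
        rintro g hg v ⟨hvW, hvk⟩
        refine ⟨hWinv g hg v hvW, ?_⟩
        have hvk' : p i v = 0 := hvk
        show p i (ρ g v) = 0
        rw [hpcomm, hvk', map_zero]
      have hW'ne : W' ≠ ⊥ := by
        -- rank argument
        intro hbot
        have h1 : Module.finrank ℂ (LinearMap.range ((p i) ∘ₗ W.subtype)) ≤ 1 := by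
          have hle : LinearMap.range ((p i) ∘ₗ W.subtype) ≤ L i := by
            rintro x ⟨y, rfl⟩
            simp only [LinearMap.coe_comp, Function.comp_apply]
            rw [hp]
            exact ((e.symm (W.subtype y)) (some i)).2
          calc Module.finrank ℂ (LinearMap.range ((p i) ∘ₗ W.subtype))
              ≤ Module.finrank ℂ (L i) := Submodule.finrank_mono hle
            _ = 1 := hL1 i
        have h2 : LinearMap.ker ((p i) ∘ₗ W.subtype) = ⊥ := by
          rw [LinearMap.ker_comp]
          have hmc : Submodule.map W.subtype (Submodule.comap W.subtype (LinearMap.ker (p i)))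
              = W ⊓ LinearMap.ker (p i) := Submodule.map_comap_subtype _ _
          apply Submodule.map_injective_of_injective W.injective_subtype
          rw [Submodule.map_bot, hmc, ← hW']
          exact hbot
        have h3 := LinearMap.finrank_range_add_finrank_ker ((p i) ∘ₗ W.subtype)
        rw [h2, finrank_bot, add_zero] at h3
        omega
      rcases hWirr W' hW'le hW'inv with h | h
      · exact absurd h hW'ne
      · intro v hv
        have : v ∈ W' := h ▸ hv
        exact this.2
    -- now every v ∈ W lies in U
    intro v hv
    have hcomp : ∀ i : Fin r, (e.symm v) (some i) = 0 := by
      intro i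
      have := hker i hv
      rw [LinearMap.mem_ker, hp] at this
      exact Subtype.ext this
    have hx : e.symm v = DirectSum.of (fun o => ↥(f o)) none ((e.symm v) none) := by
      refine DFinsupp.ext fun o => ?_
      rcases o with _ | j
      · exact (DirectSum.of_eq_same (β := fun o => ↥(f o)) none ((e.symm v) none)).symm
      · rw [hcomp j]
        exact (DirectSum.of_eq_of_ne (β := fun o => ↥(f o)) none (some j) ((e.symm v) none) (by simp)).symm
    have : v = ((e.symm v) none : V) := by
      conv_lhs => rw [← e.apply_symm_apply v]
      rw [show (e (e.symm v) : V) = DirectSum.coeLinearMap f (e.symm v) from rfl, hx,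
        DirectSum.coeLinearMap_of]
      rw [DirectSum.of_eq_same]
    rw [this]
    exact ((e.symm v) none).2
  have hsup : (sSup {W : Submodule ℂ V |
      (∀ g ∈ H, ∀ v ∈ W, ρ g v ∈ W) ∧ 2 ≤ Module.finrank ℂ W ∧
      ∀ W' ≤ W, (∀ g ∈ H, ∀ v ∈ W', ρ g v ∈ W') → W' = ⊥ ∨ W' = W} : Submodule ℂ V) ≤ U :=
    sSup_le main
  exact Submodule.finrank_mono hsup
end

section
/- Let G be a finite group acting ℂ-linearly on a finite-dimensional complex vector space V, let H ≤ G be a subgroup, and let v ∈ V be a vector whose stabilizer in G is contained in H. Then there exists a polynomial function L : V → ℂ which is H-invariant (L(h·x) = L(x) for all h ∈ H, x ∈ V) and satisfies L(g·v) = 1 for all g ∈ H and L(g·v) = 0 for all g ∈ G \ H. -/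
/-- Lagrange-interpolation characters.  If the stabilizer of `v` is contained
in the subgroup `H ≤ G`, then there is a polynomial function `L : V → ℂ` (an element of
the subalgebra of functions generated by linear functionals) which is `H`-invariant and
takes the value `1` on `H·v` and `0` on `(G∖H)·v`. -/
theorem exists_H_invariant_interpolation_polynomial
    {G : Type*} [Group G] [Fintype G] {V : Type*} [AddCommGroup V]
    [Module ℂ V] [FiniteDimensional ℂ V] (ρ : Representation ℂ G V)
    (H : Subgroup G) (v : V) (hstab : ∀ g : G, ρ g v = v → g ∈ H) :
    ∃ L : V → ℂ,
      L ∈ Algebra.adjoin ℂ {f : V → ℂ | ∃ φ : V →ₗ[ℂ] ℂ, f = ⇑φ} ∧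
      (∀ h ∈ H, ∀ x : V, L (ρ h x) = L x) ∧
      (∀ g ∈ H, L (ρ g v) = 1) ∧
      (∀ g : G, g ∉ H → L (ρ g v) = 0) := by
  classical
  set A := Algebra.adjoin ℂ {f : V → ℂ | ∃ φ : V →ₗ[ℂ] ℂ, f = ⇑φ} with hA
  -- the dual separates points
  have sep : ∀ p q : V, p ≠ q → ∃ φ : V →ₗ[ℂ] ℂ, φ p ≠ φ q := by
    intro p q hpq
    by_contra hc
    push_neg at hc
    have : ∀ f : Module.Dual ℂ V, f (p - q) = 0 := fun f => by
      simp [map_sub, hc f]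
    exact hpq (sub_eq_zero.mp ((Module.forall_dual_apply_eq_zero_iff ℂ (p - q)).mp this))
  choose φ hφ using sep
  -- general interpolation lemma
  have interp : ∀ (S : Finset V) (t : V → ℂ),
      ∃ P : V → ℂ, P ∈ A ∧ ∀ x ∈ S, P x = t x := by
    intro S t
    set Lb : V → V → ℂ := fun p => ∏ q ∈ S.erase p,
      (if h : p ≠ q then
        (φ p q h p - φ p q h q)⁻¹ • (⇑(φ p q h) - Function.const V (φ p q h q))
      else 1) with hLb
    have hLbA : ∀ p, Lb p ∈ A := by
      intro p
      apply Subalgebra.prod_mem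
      intro q hq
      by_cases h : p ≠ q
      · simp only [dif_pos h]
        apply Subalgebra.smul_mem
        apply sub_mem
        · exact Algebra.subset_adjoin ⟨φ p q h, rfl⟩
        · exact Subalgebra.algebraMap_mem A (φ p q h q)
      · simp only [dif_neg h]
        exact one_mem A
    have hLbself : ∀ p, Lb p p = 1 := by
      intro p
      rw [hLb]
      simp only [Finset.prod_apply]
      apply Finset.prod_eq_one
      intro q hq
      have hpq : p ≠ q := (Finset.mem_erase.mp hq).1.symm
      simp only [dif_pos hpq, Pi.smul_apply, Pi.sub_apply, Function.const_apply,
        smul_eq_mul]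
      exact inv_mul_cancel₀ (sub_ne_zero.mpr (hφ p q hpq))
    have hLbother : ∀ p x, x ∈ S → x ≠ p → Lb p x = 0 := by
      intro p x hxS hxp
      rw [hLb]
      simp only [Finset.prod_apply]
      apply Finset.prod_eq_zero (Finset.mem_erase.mpr ⟨hxp, hxS⟩)
      have hpx : p ≠ x := fun h => hxp h.symm
      simp [dif_pos hpx]
    refine ⟨∑ p ∈ S, t p • Lb p, ?_, ?_⟩
    · exact Subalgebra.sum_mem A fun p _ => Subalgebra.smul_mem A (hLbA p) (t p)
    · intro x hx
      simp only [Finset.sum_apply, Pi.smul_apply, smul_eq_mul]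
      rw [Finset.sum_eq_single x]
      · rw [hLbself x, mul_one]
      · intro p hp hpx
        rw [hLbother p x hx (fun h => hpx h.symm), mul_zero]
      · intro h; exact absurd hx h
  -- each translate of an element of A is in A
  have htrans : ∀ Q : V → ℂ, Q ∈ A → ∀ g : G, (fun x => Q (ρ g x)) ∈ A := by
    intro Q hQ g
    induction hQ using Algebra.adjoin_induction with
    | mem f hf =>
      obtain ⟨ψ, rfl⟩ := hf
      exact Algebra.subset_adjoin ⟨ψ.comp (ρ g), rfl⟩
    | algebraMap c => exact Subalgebra.algebraMap_mem A c
    | add f₁ f₂ _ _ h₁ h₂ => exact add_mem h₁ h₂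
    | mul f₁ f₂ _ _ h₁ h₂ => exact mul_mem h₁ h₂
  -- composition formula
  have hcomp : ∀ (a b : G) (x : V), ρ a (ρ b x) = ρ (a * b) x := by
    intro a b x
    rw [map_mul]
    rfl
  -- the orbit and the target function
  set S : Finset V := Finset.image (fun g => ρ g v) Finset.univ with hS
  set t : V → ℂ := fun x => if ∃ h ∈ H, ρ h v = x then 1 else 0 with ht
  obtain ⟨P, hPA, hPval⟩ := interp S t
  -- averaging over H
  set L : V → ℂ := (Fintype.card H : ℂ)⁻¹ • ∑ h : H, (fun x => P (ρ (h : G) x)) with hL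
  have hcard : (Fintype.card H : ℂ) ≠ 0 := by
    exact_mod_cast Fintype.card_ne_zero
  have hLA : L ∈ A := by
    apply Subalgebra.smul_mem
    exact Subalgebra.sum_mem A fun h _ => htrans P hPA (h : G)
  -- key evaluation: P on the orbit
  have hPorbit : ∀ g : G, P (ρ g v) = t (ρ g v) := fun g =>
    hPval _ (Finset.mem_image.mpr ⟨g, Finset.mem_univ g, rfl⟩)
  -- invariance
  have hinv : ∀ h ∈ H, ∀ x : V, L (ρ h x) = L x := by
    intro h₀ hh₀ x
    rw [hL]
    simp only [Pi.smul_apply, Finset.sum_apply, smul_eq_mul]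
    congr 1
    refine (Fintype.sum_bijective (fun h : H => h * (⟨h₀, hh₀⟩ : H)⁻¹)
      (Group.mulRight_bijective _)
      (fun h : H => P (ρ (h : G) x)) (fun h : H => P (ρ (h : G) (ρ h₀ x)))
      (fun h => ?_)).symm
    show P (ρ (h : G) x) = P (ρ (((h * (⟨h₀, hh₀⟩ : H)⁻¹ : H) : G)) (ρ h₀ x))
    rw [hcomp]
    congr 2
    push_cast
    group
  refine ⟨L, hLA, hinv, ?_, ?_⟩
  · -- value 1 on H·v
    intro g hg
    rw [hL]
    simp only [Pi.smul_apply, Finset.sum_apply, smul_eq_mul]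
    have hterm : ∀ h : H, P (ρ (h : G) (ρ g v)) = 1 := by
      intro h
      rw [hcomp, hPorbit, ht]
      exact if_pos ⟨(h : G) * g, H.mul_mem h.2 hg, rfl⟩
    rw [Finset.sum_congr rfl (fun h _ => hterm h), Finset.sum_const,
      Finset.card_univ, nsmul_eq_mul, mul_one, inv_mul_cancel₀ hcard]
  · -- value 0 off H·v
    intro g hg
    rw [hL]
    simp only [Pi.smul_apply, Finset.sum_apply, smul_eq_mul]
    have hterm : ∀ h : H, P (ρ (h : G) (ρ g v)) = 0 := by
      intro h
      rw [hcomp, hPorbit, ht]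
      refine if_neg ?_
      rintro ⟨h', hh', heq⟩
      apply hg
      have hfix : ρ (((h : G) * g)⁻¹ * h') v = v := by
        rw [← hcomp]
        rw [heq, hcomp, inv_mul_cancel]
        simp
      have hmem : ((h : G) * g)⁻¹ * h' ∈ H := hstab _ hfix
      have : (h : G) * g ∈ H := by
        have := H.mul_mem hh' (H.inv_mem hmem)
        simpa [mul_assoc] using this
      have := H.mul_mem (H.inv_mem h.2) this
      simpa [← mul_assoc] using this
    rw [Finset.sum_congr rfl (fun h _ => hterm h), Finset.sum_const]
    simp
end

section
/- Let G be a finite group and V a faithful finite-dimensional complex representation of G. Then for every finite-dimensional complex irreducible representation W of G there exists an integer d ≥ 0 such that W is isomorphic to a subrepresentation of the d-th symmetric power Sym^d(V). -/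
open Finset

/-- A vector space over an infinite field is not a finite union of proper subspaces. -/
private lemma exists_forall_not_mem_submodule {k E ι : Type*} [Field k] [Infinite k]
    [AddCommGroup E] [Module k E] [Finite ι] {p : ι → Submodule k E} (h : ∀ i, p i ≠ ⊤) :
    ∃ v : E, ∀ i, v ∉ p i := by
  by_contra hc
  push_neg at hc
  have hcov : ⋃ i, (p i : Set E) = Set.univ :=
    Set.eq_univ_of_forall fun v => Set.mem_iUnion.2 (hc v)
  obtain ⟨i, hi⟩ := Subspace.exists_eq_top_of_iUnion_eq_univ hcov
  exact h i hi

/-- The "d-th power of evaluation at `u`" symmetric multilinear form on the dual. -/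
private noncomputable def evalPow {V : Type*} [AddCommGroup V] [Module ℂ V] (d : ℕ) (u : V) :
    MultilinearMap ℂ (fun _ : Fin d => V →ₗ[ℂ] ℂ) ℂ :=
  (MultilinearMap.mkPiAlgebra ℂ (Fin d) ℂ).compLinearMap
    fun _ => LinearMap.applyₗ (R := ℂ) (M₂ := ℂ) u

private lemma evalPow_apply {V : Type*} [AddCommGroup V] [Module ℂ V] (d : ℕ) (u : V)
    (fs : Fin d → V →ₗ[ℂ] ℂ) : evalPow d u fs = ∏ i, fs i u := by
  simp [evalPow]

/-- Every finite-dimensional complex irreducible representation `W` of a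
finite group `G` occurs in some symmetric power `Sym^d(V)` of a faithful representation
`V`.  Here `Sym^d(V)` is realized as the space of symmetric `d`-multilinear forms on the
dual `V* = (V →ₗ ℂ)`, with `G` acting by precomposing each dual argument with `ρV g`;
"occurs" means there is an injective equivariant linear map from `W` into the symmetric
part. -/
theorem irreducible_occurs_in_symmetric_power_of_faithful
    {G : Type*} [Group G] [Fintype G]
    {V W : Type*} [AddCommGroup V] [Module ℂ V] [FiniteDimensional ℂ V]
    [AddCommGroup W] [Module ℂ W] [FiniteDimensional ℂ W]
    (ρV : Representation ℂ G V) (hfaithful : Function.Injective ρV)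
    (ρW : Representation ℂ G W) [Nontrivial W]
    (hirr : ∀ p : Submodule ℂ W, (∀ g : G, ∀ w ∈ p, ρW g w ∈ p) → p = ⊥ ∨ p = ⊤) :
    ∃ (d : ℕ) (ι : W →ₗ[ℂ] MultilinearMap ℂ (fun _ : Fin d => V →ₗ[ℂ] ℂ) ℂ),
      Function.Injective ι ∧
      (∀ (w : W) (σ : Equiv.Perm (Fin d)), (ι w).domDomCongr σ = ι w) ∧
      ∀ (g : G) (w : W),
        ι (ρW g w) = (ι w).compLinearMap (fun _ => LinearMap.lcomp ℂ ℂ (ρV g)) := by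
  classical
  have hWcancel : ∀ (g : G) (w : W), ρW g⁻¹ (ρW g w) = w := by
    intro g w
    rw [← Module.End.mul_apply, ← map_mul, inv_mul_cancel, map_one, Module.End.one_apply]
  -- Step 1: a vector with trivial stabilizer.
  obtain ⟨v₀, hv₀⟩ : ∃ v : V,
      ∀ g : {g : G // g ≠ 1}, v ∉ LinearMap.ker (ρV g.1 - LinearMap.id) := by
    apply exists_forall_not_mem_submodule
    rintro ⟨g, hg⟩ htop
    apply hg
    apply hfaithful
    rw [map_one]
    have h0 : ρV g - LinearMap.id = 0 := LinearMap.ker_eq_top.mp htop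
    have : ρV g = LinearMap.id := by rwa [sub_eq_zero] at h0
    simpa [Module.End.one_eq_id] using this
  have hfree : ∀ g : G, ρV g v₀ = v₀ → g = 1 := by
    intro g hg
    by_contra hne
    exact hv₀ ⟨g, hne⟩ (by simp [LinearMap.mem_ker, LinearMap.sub_apply, hg])
  have horb : Function.Injective fun g : G => ρV g v₀ := by
    intro g h hgh
    simp only at hgh
    have h1 : ρV (h⁻¹ * g) v₀ = v₀ := by
      rw [map_mul, Module.End.mul_apply, hgh, ← Module.End.mul_apply, ← map_mul,
        inv_mul_cancel, map_one, Module.End.one_apply]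
    have := hfree _ h1
    exact (inv_mul_eq_one.mp this).symm
  -- Step 2: a linear functional separating the orbit points.
  obtain ⟨f, hf⟩ : ∃ f : V →ₗ[ℂ] ℂ, ∀ p : {p : G × G // p.1 ≠ p.2},
      f ∉ LinearMap.ker (LinearMap.applyₗ (R := ℂ) (M₂ := ℂ)
        (ρV p.1.1 v₀ - ρV p.1.2 v₀)) := by
    apply exists_forall_not_mem_submodule
    rintro ⟨⟨g, h⟩, hgh⟩ htop
    have hne : ρV g v₀ - ρV h v₀ ≠ 0 := sub_ne_zero.mpr fun hcon => hgh (horb hcon)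
    apply hne
    rw [← Module.forall_dual_apply_eq_zero_iff ℂ]
    intro φ
    have h0 := LinearMap.ker_eq_top.mp htop
    simpa using DFunLike.congr_fun h0 φ
  set t : G → ℂ := fun g => f (ρV g v₀) with ht
  have htsep : Function.Injective t := by
    intro g h hgh
    by_contra hne
    apply hf ⟨(g, h), hne⟩
    have hgh' : f ((ρV g) v₀) = f ((ρV h) v₀) := hgh
    simp only [LinearMap.mem_ker, map_sub, LinearMap.sub_apply,
      LinearMap.applyₗ_apply_apply, hgh', sub_self]
  -- Step 3: a nonzero vector and a functional not vanishing on it.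
  obtain ⟨w₀, hw₀⟩ := exists_ne (0 : W)
  obtain ⟨α, hα⟩ : ∃ α : W →ₗ[ℂ] ℂ, α w₀ ≠ 0 := by
    by_contra hcon
    push_neg at hcon
    exact hw₀ ((Module.forall_dual_apply_eq_zero_iff ℂ w₀).mp hcon)
  set c : G → ℂ := fun g => α (ρW g⁻¹ w₀) with hcdef
  have hc1 : c 1 ≠ 0 := by simpa [hcdef] using hα
  -- Step 4: the candidate equivariant maps, one for each degree `d`.
  set Φ : ∀ d : ℕ, W →ₗ[ℂ] MultilinearMap ℂ (fun _ : Fin d => V →ₗ[ℂ] ℂ) ℂ :=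
    fun d => ∑ g : G, LinearMap.smulRight (α ∘ₗ (ρW g⁻¹ : W →ₗ[ℂ] W)) (evalPow d (ρV g v₀))
    with hΦ
  have happly : ∀ (d : ℕ) (w : W) (fs : Fin d → V →ₗ[ℂ] ℂ),
      Φ d w fs = ∑ g : G, α (ρW g⁻¹ w) * ∏ i, fs i (ρV g v₀) := by
    intro d w fs
    rw [hΦ]
    simp [LinearMap.sum_apply, MultilinearMap.sum_apply, evalPow_apply, smul_eq_mul]
  -- Symmetry.
  have hsym : ∀ (d : ℕ) (w : W) (σ : Equiv.Perm (Fin d)),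
      (Φ d w).domDomCongr σ = Φ d w := by
    intro d w σ
    apply MultilinearMap.ext
    intro fs
    rw [MultilinearMap.domDomCongr_apply, happly, happly]
    refine Finset.sum_congr rfl fun g _ => ?_
    rw [Equiv.prod_comp σ fun i => fs i (ρV g v₀)]
  -- Equivariance.
  have hequiv : ∀ (d : ℕ) (h : G) (w : W),
      Φ d (ρW h w) = (Φ d w).compLinearMap (fun _ => LinearMap.lcomp ℂ ℂ (ρV h)) := by
    intro d h w
    apply MultilinearMap.ext
    intro fs
    rw [MultilinearMap.compLinearMap_apply, happly, happly]
    refine (Fintype.sum_equiv (Equiv.mulLeft h)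
      (fun g => α (ρW g⁻¹ w) * ∏ i, (LinearMap.lcomp ℂ ℂ (ρV h)) (fs i) (ρV g v₀))
      (fun g => α (ρW g⁻¹ (ρW h w)) * ∏ i, fs i (ρV g v₀)) (fun g => ?_)).symm
    have e1 : α (ρW (h * g)⁻¹ (ρW h w)) = α (ρW g⁻¹ w) := by
      rw [mul_inv_rev, map_mul, Module.End.mul_apply, hWcancel]
    have e2 : ∀ i : Fin d, (LinearMap.lcomp ℂ ℂ (ρV h)) (fs i) (ρV g v₀)
        = fs i (ρV (h * g) v₀) := by
      intro i
      rw [map_mul, Module.End.mul_apply]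
      rfl
    simp only [Equiv.coe_mulLeft, e1]
    refine congrArg (fun z => α (ρW g⁻¹ w) * z) ?_
    exact Finset.prod_congr rfl fun i _ => e2 i
  -- Step 5: some degree is nonvanishing, by Vandermonde.
  have hd : ∃ d : ℕ, ∑ g : G, c g * t g ^ d ≠ 0 := by
    by_contra hall
    push_neg at hall
    set e := (Fintype.equivFin G).symm with he
    have hinj : Function.Injective (t ∘ e) := htsep.comp e.injective
    have hzero : (c ∘ e) = 0 := by
      apply Matrix.eq_zero_of_forall_pow_sum_mul_pow_eq_zero hinj
      intro i
      have := hall (i : ℕ)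
      calc ∑ j, (c ∘ e) j * (t ∘ e) j ^ (i : ℕ)
          = ∑ g : G, c g * t g ^ (i : ℕ) :=
            Equiv.sum_comp e (fun g => c g * t g ^ (i : ℕ))
        _ = 0 := this
    have : c (e (e.symm 1)) = 0 := congrFun hzero (e.symm 1)
    rw [Equiv.apply_symm_apply] at this
    exact hc1 this
  obtain ⟨d, hd⟩ := hd
  -- Conclusion: injectivity via irreducibility.
  have hker : ∀ g : G, ∀ w ∈ LinearMap.ker (Φ d), ρW g w ∈ LinearMap.ker (Φ d) := by
    intro g w hw
    rw [LinearMap.mem_ker] at hw ⊢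
    rw [hequiv, hw]
    apply MultilinearMap.ext
    intro fs
    simp
  rcases hirr (LinearMap.ker (Φ d)) hker with hbot | htop
  · exact ⟨d, Φ d, LinearMap.ker_eq_bot.mp hbot, fun w σ => hsym d w σ,
      fun g w => hequiv d g w⟩
  · exfalso
    have hmem : w₀ ∈ LinearMap.ker (Φ d) := htop ▸ Submodule.mem_top
    have hz : Φ d w₀ (fun _ => f) = 0 := by
      rw [LinearMap.mem_ker.mp hmem]
      rfl
    apply hd
    rw [← hz, happly]
    refine Finset.sum_congr rfl fun g _ => ?_
    rw [Finset.prod_const, Finset.card_univ, Fintype.card_fin]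
end
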